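/- Let α ∈ ℝ and set δ := −α/2. Let u : ℝ → 𝒮(ℝ;ℂ) be a continuously differentiable curve in the Schwartz space, written u(t,x), solving the nonlocal derivative NLS: i∂ₜu + ∂ₓ²u + α u u* ∂ₓu = 0 pointwise, where u*(t,x) := conj(u(t,−x)). Define v(t,x) := u(t,x)·exp(−δ·∂ₓ⁻¹(u(t,·) u*(t,·))(x)). Then v solves, for all (t,x), i∂ₜv + ∂ₓ²v − α v² ∂ₓ(v*) − (α²/2) v³ (v*)² = 0, where v*(t,x) := conj(v(t,−x)). -/

import Mathlib

open MeasureTheory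

/-- The antiderivative `∂ₓ⁻¹ f (x) = ½(∫_{-∞}^x f − ∫_x^∞ f)`. -/
noncomputable def pinv (f : ℝ → ℂ) (x : ℝ) : ℂ :=
  (1 / 2 : ℂ) * ((∫ y in Set.Iic x, f y) - ∫ y in Set.Ici x, f y)

/-!
The density `ρ = u u*` satisfies `ρ* = ρ`, so `P = ∂ₓ⁻¹ρ` satisfies `P* = −P`, whence
`v* = u* e^{δP}` while `v = u e^{−δP}`; in every term of the target equation the exponentials
combine to a single factor `e^{−δP}`. The one non-algebraic input is `∂ₜP`: by the equation,
`∂ₜρ = ∂ₓJ` for the flux `J = i(u* ∂ₓu − u ∂ₓ(u*) + (α/2)ρ²)`, which vanishes at `±∞`, so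
`∂ₜP = J`. Substituting, the target equation becomes `e^{−δP}` times the equation for `u`.
-/

open Filter Set Topology ComplexConjugate
open scoped SchwartzMap

noncomputable def nonlocalDensity (f : ℝ → ℂ) (y : ℝ) : ℂ := f y * conj (f (-y))

theorem SchwartzMap.exists_norm_le_inv_one_add_sq {X F : Type*} [TopologicalSpace X]
    [NormedAddCommGroup F] [NormedSpace ℝ F] {u : X → 𝓢(ℝ, F)} (hu : Continuous u)
    {K : Set X} (hK : IsCompact K) :
    ∃ C, 0 ≤ C ∧ ∀ τ ∈ K, ∀ y, ‖u τ y‖ ≤ C * (1 + y ^ 2)⁻¹ := by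
  set N : 𝓢(ℝ, F) → ℝ := fun f =>
    SchwartzMap.seminorm ℝ 0 0 f + SchwartzMap.seminorm ℝ 2 0 f
  have hN : Continuous N := ((schwartz_withSeminorms ℝ ℝ F).continuous_seminorm (0, 0)).add
    ((schwartz_withSeminorms ℝ ℝ F).continuous_seminorm (2, 0))
  obtain ⟨C, hC⟩ := hK.exists_bound_of_continuousOn (hN.comp hu).continuousOn
  refine ⟨max C 0, le_max_right _ _, fun τ hτ y => ?_⟩
  have h0 := norm_le_seminorm ℝ (u τ) y
  have h2 := norm_pow_mul_le_seminorm ℝ (u τ) 2 y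
  rw [Real.norm_eq_abs, sq_abs] at h2
  have hNC : N (u τ) ≤ max C 0 := (le_abs_self _).trans ((hC τ hτ).trans (le_max_left _ _))
  rw [← div_eq_mul_inv, le_div_iff₀ (by positivity)]
  nlinarith

theorem SchwartzMap.tendsto_conj_comp_neg_cocompact (f : 𝓢(ℝ, ℂ)) :
    Tendsto (fun y => conj (f (-y))) (cocompact ℝ) (𝓝 0) := by
  have h := (Complex.continuous_conj.tendsto 0).comp
    (f.tendsto_cocompact.comp (Homeomorph.neg ℝ).map_cocompact.le)
  rwa [map_zero] at h

theorem SchwartzMap.integrable_mul_conj_comp_neg (f g : 𝓢(ℝ, ℂ)) :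
    Integrable (fun y => f y * conj (g (-y))) :=
  f.integrable.mul_bdd (by fun_prop : Continuous fun y => conj (g (-y))).aestronglyMeasurable
    (ae_of_all _ fun y => by simpa using norm_le_seminorm ℝ g (-y))

theorem HasDerivAt.conj_comp_neg {g : ℝ → ℂ} {g' : ℂ} {x : ℝ} (h : HasDerivAt g g' (-x)) :
    HasDerivAt (fun y => conj (g (-y))) (-conj g') x := by
  simpa [Complex.star_def] using (h.scomp x (hasDerivAt_neg x)).star

theorem HasDerivAt.mul_cexp_const_mul {𝕜 : Type*} [NontriviallyNormedField 𝕜]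
    [NormedAlgebra 𝕜 ℂ] {f P : 𝕜 → ℂ} {f' p : ℂ} {x : 𝕜} (hf : HasDerivAt f f' x)
    (hP : HasDerivAt P p x) (c : ℂ) :
    HasDerivAt (fun y => f y * Complex.exp (c * P y))
      ((f' + c * (p * f x)) * Complex.exp (c * P x)) x :=
  (hf.mul ((hP.const_mul c).cexp)).congr_deriv (by ring)

theorem hasDerivAt_pinv {f : ℝ → ℂ} (hf : Integrable f) (hc : Continuous f) (x : ℝ) :
    HasDerivAt (pinv f) (f x) x := by
  have hsplit : ∀ z, pinv f z = (∫ y in (0 : ℝ)..z, f y)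
      + ((∫ y in Iic (0 : ℝ), f y) - (1 / 2 : ℂ) * ∫ y, f y) := by
    intro z
    have h := intervalIntegral.integral_Iic_add_Ioi (b := z) hf.integrableOn hf.integrableOn
    rw [pinv, integral_Ici_eq_integral_Ioi,
      ← intervalIntegral.integral_Iic_sub_Iic hf.integrableOn hf.integrableOn]
    linear_combination (-(1 / 2 : ℂ)) * h
  rw [funext hsplit]
  exact (intervalIntegral.integral_hasDerivAt_right hf.intervalIntegrable
    hc.aestronglyMeasurable.stronglyMeasurableAtFilter hc.continuousAt).add_const _

theorem pinv_eq_of_hasDerivAt {g g' : ℝ → ℂ} (hd : ∀ x, HasDerivAt g (g' x) x)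
    (hi : Integrable g') (hg : Tendsto g (cocompact ℝ) (𝓝 0)) (x : ℝ) : pinv g' x = g x := by
  rw [cocompact_eq_atBot_atTop] at hg
  rw [pinv, integral_Ici_eq_integral_Ioi,
    integral_Iic_of_hasDerivAt_of_tendsto' (fun y _ => hd y) hi.integrableOn
      (hg.mono_left le_sup_left),
    integral_Ioi_of_hasDerivAt_of_tendsto' (fun y _ => hd y) hi.integrableOn
      (hg.mono_left le_sup_right)]
  ring

theorem conj_pinv_neg (f : ℝ → ℂ) (x : ℝ) :
    conj (pinv f (-x)) = -pinv (fun y => conj (f (-y))) x := by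
  rw [pinv, pinv, integral_Ici_eq_integral_Ioi, integral_Ici_eq_integral_Ioi,
    integral_comp_neg_Iic x (fun y => conj (f y)), integral_comp_neg_Ioi x (fun y => conj (f y)),
    map_mul, map_sub, ← integral_conj, ← integral_conj]
  simp only [map_div₀, map_one, map_ofNat]
  ring

theorem conj_pinv_nonlocalDensity_neg (f : ℝ → ℂ) (x : ℝ) :
    conj (pinv (nonlocalDensity f) (-x)) = -pinv (nonlocalDensity f) x := by
  rw [conj_pinv_neg]
  congr 2
  funext y
  simp only [nonlocalDensity, neg_neg, map_mul, Complex.conj_conj, mul_comm]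

theorem SchwartzMap.hasDerivAt_nonlocalDensity (f : 𝓢(ℝ, ℂ)) (x : ℝ) :
    HasDerivAt (nonlocalDensity f)
      (deriv f x * conj (f (-x)) + f x * -conj (deriv f (-x))) x :=
  (f.hasDerivAt x).mul (f.hasDerivAt (-x)).conj_comp_neg

theorem SchwartzMap.hasDerivAt_pinv_nonlocalDensity (f : 𝓢(ℝ, ℂ)) (x : ℝ) :
    HasDerivAt (pinv (nonlocalDensity f)) (nonlocalDensity f x) x :=
  hasDerivAt_pinv (f.integrable_mul_conj_comp_neg f) (by fun_prop) x

theorem pinv_timeDeriv_nonlocalDensity_eq_flux (α : ℝ) (f ft : 𝓢(ℝ, ℂ))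
    (heq : ∀ x, Complex.I * ft x + deriv (deriv f) x
      + α * f x * conj (f (-x)) * deriv f x = 0) (x : ℝ) :
    pinv (fun y => ft y * conj (f (-y)) + f y * conj (ft (-y))) x
      = Complex.I * (conj (f (-x)) * deriv f x + f x * conj (deriv f (-x))
          + α / 2 * nonlocalDensity f x ^ 2) := by
  have hf : ∀ z, HasDerivAt f (deriv f z) z := f.hasDerivAt
  have hf' : ∀ z, HasDerivAt (deriv f) (deriv (deriv f) z) z :=
    (SchwartzMap.derivCLM ℝ ℂ f).hasDerivAt
  have hft : ∀ z, ft z = Complex.I * deriv (deriv f) z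
      + Complex.I * α * (nonlocalDensity f z * deriv f z) := by
    intro z
    unfold nonlocalDensity
    linear_combination (-Complex.I) * heq z + ft z * Complex.I_sq
  apply pinv_eq_of_hasDerivAt
  · intro z
    have hflux := ((((hf (-z)).conj_comp_neg.mul (hf' z)).add
      ((hf z).mul (hf' (-z)).conj_comp_neg)).add
      (((f.hasDerivAt_nonlocalDensity z).pow 2).const_mul (α / 2 : ℂ))).const_mul Complex.I
    refine hflux.congr_deriv ?_
    rw [hft z, hft (-z)]
    simp only [nonlocalDensity, neg_neg, map_add, map_mul, Complex.conj_I, Complex.conj_ofReal,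
      Complex.conj_conj]
    ring
  · exact (ft.integrable_mul_conj_comp_neg f).add (f.integrable_mul_conj_comp_neg ft)
  · have hd : Tendsto (deriv f) (cocompact ℝ) (𝓝 0) :=
      (SchwartzMap.derivCLM ℝ ℂ f).tendsto_cocompact
    have hds : Tendsto (fun y => conj (deriv f (-y))) (cocompact ℝ) (𝓝 0) :=
      (SchwartzMap.derivCLM ℝ ℂ f).tendsto_conj_comp_neg_cocompact
    have hρ0 := f.tendsto_cocompact.mul f.tendsto_conj_comp_neg_cocompact
    simpa [nonlocalDensity] using (((f.tendsto_conj_comp_neg_cocompact.mul hd).add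
      (f.tendsto_cocompact.mul hds)).add
        ((hρ0.pow 2).const_mul (α / 2 : ℂ))).const_mul Complex.I

noncomputable def gaugeTransform (c : ℝ) (f : ℝ → ℂ) (y : ℝ) : ℂ :=
  f y * Complex.exp (c * pinv (nonlocalDensity f) y)

theorem conj_gaugeTransform_neg (c : ℝ) (f : ℝ → ℂ) (y : ℝ) :
    conj (gaugeTransform c f (-y))
      = conj (f (-y)) * Complex.exp (-c * pinv (nonlocalDensity f) y) := by
  rw [gaugeTransform, map_mul, ← Complex.exp_conj, map_mul, conj_pinv_nonlocalDensity_neg,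
    Complex.conj_ofReal, mul_neg, neg_mul]

section SchwartzGaugeTransform

variable (f : 𝓢(ℝ, ℂ)) (c : ℝ)

theorem SchwartzMap.deriv_gaugeTransform :
    deriv (gaugeTransform c f) = fun x => (deriv f x + c * (nonlocalDensity f x * f x))
      * Complex.exp (c * pinv (nonlocalDensity f) x) :=
  funext fun x =>
    ((f.hasDerivAt x).mul_cexp_const_mul (f.hasDerivAt_pinv_nonlocalDensity x) c).deriv

theorem SchwartzMap.hasDerivAt_deriv_gaugeTransform (x : ℝ) :
    HasDerivAt (deriv (gaugeTransform c f))
      ((deriv (deriv f) x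
          + c * ((deriv f x * conj (f (-x)) + f x * -conj (deriv f (-x))) * f x
            + nonlocalDensity f x * deriv f x)
          + c * (nonlocalDensity f x * (deriv f x + c * (nonlocalDensity f x * f x))))
        * Complex.exp (c * pinv (nonlocalDensity f) x)) x := by
  rw [f.deriv_gaugeTransform]
  exact (((SchwartzMap.derivCLM ℝ ℂ f).hasDerivAt x).add
    (((f.hasDerivAt_nonlocalDensity x).mul (f.hasDerivAt x)).const_mul _)).mul_cexp_const_mul
    (f.hasDerivAt_pinv_nonlocalDensity x) _

theorem SchwartzMap.hasDerivAt_conj_gaugeTransform_neg (x : ℝ) :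
    HasDerivAt (fun y => conj (gaugeTransform c f (-y)))
      ((-conj (deriv f (-x)) + -c * (nonlocalDensity f x * conj (f (-x))))
        * Complex.exp (-c * pinv (nonlocalDensity f) x)) x := by
  simp only [conj_gaugeTransform_neg]
  exact (f.hasDerivAt (-x)).conj_comp_neg.mul_cexp_const_mul
    (f.hasDerivAt_pinv_nonlocalDensity x) _

end SchwartzGaugeTransform

section TimeDerivative

variable {u ut : ℝ → 𝓢(ℝ, ℂ)} (hu : Continuous u) (hut : Continuous ut)
  (hderiv : ∀ t x, HasDerivAt (fun τ => u τ x) (ut t x) t)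
include hu hut hderiv

theorem hasDerivAt_setIntegral_nonlocalDensity_time (s : Set ℝ) (t : ℝ) :
    HasDerivAt (fun τ => ∫ y in s, nonlocalDensity (u τ) y)
      (∫ y in s, (ut t y * conj (u t (-y)) + u t y * conj (ut t (-y)))) t := by
  have hK : IsCompact (Icc (t - 1) (t + 1)) := isCompact_Icc
  obtain ⟨C, hC0, hC⟩ := SchwartzMap.exists_norm_le_inv_one_add_sq hu hK
  obtain ⟨D, hD0, hD⟩ := SchwartzMap.exists_norm_le_inv_one_add_sq hut hK
  have hbound : ∀ τ ∈ Icc (t - 1) (t + 1), ∀ y : ℝ,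
      ‖ut τ y * conj (u τ (-y)) + u τ y * conj (ut τ (-y))‖
        ≤ 2 * (C * D) * (1 + y ^ 2)⁻¹ := by
    intro τ hτ y
    have hinv : (1 + (-y) ^ 2)⁻¹ ≤ 1 := inv_le_one_of_one_le₀ (by nlinarith)
    have hu' : ‖u τ (-y)‖ ≤ C := (hC τ hτ (-y)).trans (mul_le_of_le_one_right hC0 hinv)
    have hut' : ‖ut τ (-y)‖ ≤ D := (hD τ hτ (-y)).trans (mul_le_of_le_one_right hD0 hinv)
    calc _ ≤ ‖ut τ y‖ * ‖u τ (-y)‖ + ‖u τ y‖ * ‖ut τ (-y)‖ := by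
          grw [norm_add_le, norm_mul, norm_mul, Complex.norm_conj, Complex.norm_conj]
      _ ≤ D * (1 + y ^ 2)⁻¹ * C + C * (1 + y ^ 2)⁻¹ * D := by
          gcongr
          exacts [hD τ hτ y, hC τ hτ y]
      _ = 2 * (C * D) * (1 + y ^ 2)⁻¹ := by ring
  have hmeas : ∀ τ, AEStronglyMeasurable (nonlocalDensity (u τ)) (volume.restrict s) :=
    fun τ => (by unfold nonlocalDensity; fun_prop :
      Continuous (nonlocalDensity (u τ))).aestronglyMeasurable
  refine (hasDerivAt_integral_of_dominated_loc_of_deriv_le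
    (Icc_mem_nhds (by linarith) (by linarith)) (Eventually.of_forall hmeas)
    ((u t).integrable_mul_conj_comp_neg (u t)).restrict
    (by fun_prop : Continuous fun y =>
      ut t y * conj (u t (-y)) + u t y * conj (ut t (-y))).aestronglyMeasurable
    (ae_of_all _ fun y τ hτ => hbound τ hτ y)
    ((integrable_inv_one_add_sq.const_mul _).restrict)
    (ae_of_all _ fun y τ _ => ?_)).2
  exact (hderiv τ y).mul (hderiv τ (-y)).star

theorem hasDerivAt_pinv_nonlocalDensity_time (t x : ℝ) :
    HasDerivAt (fun τ => pinv (nonlocalDensity (u τ)) x)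
      (pinv (fun y => ut t y * conj (u t (-y)) + u t y * conj (ut t (-y))) x) t :=
  ((hasDerivAt_setIntegral_nonlocalDensity_time hu hut hderiv (Iic x) t).sub
    (hasDerivAt_setIntegral_nonlocalDensity_time hu hut hderiv (Ici x) t)).const_mul (1 / 2 : ℂ)

theorem hasDerivAt_gaugeTransform_time (c : ℝ) (t x : ℝ) :
    HasDerivAt (fun τ => gaugeTransform c (u τ) x)
      ((ut t x + c * (pinv (fun y => ut t y * conj (u t (-y)) + u t y * conj (ut t (-y))) x
          * u t x)) * Complex.exp (c * pinv (nonlocalDensity (u t)) x)) t :=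
  (hderiv t x).mul_cexp_const_mul (hasDerivAt_pinv_nonlocalDensity_time hu hut hderiv t x) c

end TimeDerivative

/-- If `u(t,·)` is a continuously differentiable curve of Schwartz functions (with time
derivative `ut`) solving the nonlocal derivative NLS `i uₜ + ∂ₓ²u + α u u* ∂ₓu = 0`, and
`δ = −α/2`, then the gauge transform `v = u · exp(−δ ∂ₓ⁻¹(u u*))` solves
`i vₜ + ∂ₓ²v − α v² ∂ₓ(v*) − (α²/2) v³ (v*)² = 0`, where `w*(t,x) = conj(w(t,−x))`. -/
theorem stmt_8 (α δ : ℝ) (hδ : δ = -α / 2) (u ut : ℝ → SchwartzMap ℝ ℂ)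
    (hu : Continuous u) (hut : Continuous ut)
    (hderiv : ∀ t x : ℝ, HasDerivAt (fun τ => u τ x) (ut t x) t)
    (heq : ∀ t x : ℝ,
      Complex.I * ut t x + deriv (deriv (fun y => u t y)) x
        + (α : ℂ) * u t x * (starRingEnd ℂ) (u t (-x)) * deriv (fun y => u t y) x = 0)
    (v : ℝ → ℝ → ℂ)
    (hv : ∀ t x : ℝ, v t x =
      u t x * Complex.exp (-(δ : ℂ) * pinv (fun y => u t y * (starRingEnd ℂ) (u t (-y))) x)) :
    ∀ t x : ℝ,
      Complex.I * deriv (fun τ => v τ x) t + deriv (deriv (fun y => v t y)) x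
        - (α : ℂ) * (v t x) ^ 2 * deriv (fun y => (starRingEnd ℂ) (v t (-y))) x
        - ((α : ℂ) ^ 2 / 2) * (v t x) ^ 3 * ((starRingEnd ℂ) (v t (-x))) ^ 2 = 0 := by
  intro t x
  have hvg : v = fun τ => gaugeTransform (α / 2) (u τ) := by
    ext τ y
    rw [hv, hδ, gaugeTransform]
    congr 3
    push_cast
    ring
  subst hvg
  rw [(hasDerivAt_gaugeTransform_time hu hut hderiv _ t x).deriv,
    ((u t).hasDerivAt_deriv_gaugeTransform _ x).deriv,
    ((u t).hasDerivAt_conj_gaugeTransform_neg _ x).deriv, conj_gaugeTransform_neg,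
    pinv_timeDeriv_nonlocalDensity_eq_flux α (u t) (ut t) (heq t) x]
  simp only [gaugeTransform]
  push_cast
  set E := Complex.exp ((α : ℂ) / 2 * pinv (nonlocalDensity (u t)) x)
  set F := Complex.exp (-((α : ℂ) / 2) * pinv (nonlocalDensity (u t)) x)
  have hEF : E * F = 1 := by
    rw [← Complex.exp_add, ← add_mul, add_neg_cancel, zero_mul, Complex.exp_zero]
  simp only [nonlocalDensity]
  linear_combination E * heq t x
    + (α / 2 : ℂ) * E * (u t x * conj (u t (-x)) * deriv (u t) x
        + u t x ^ 2 * conj (deriv (u t) (-x))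
        + (α / 2 : ℂ) * u t x ^ 3 * conj (u t (-x)) ^ 2) * Complex.I_sq
    + (α * u t x ^ 2 * conj (deriv (u t) (-x)) * E
        - (α ^ 2 / 2 : ℂ) * u t x ^ 3 * conj (u t (-x)) ^ 2 * E ^ 2 * F) * hEF
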